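/- Let w and w' be words over {2,3} of the same length n with the same number of 2's and 3's, ordered lexicographically with 2 < 3. If w' is strictly smaller than w in lexicographic order, then the coefficient of δ_{cat₁(w')} in K_{0,1}(w) is zero. Moreover, for every word w over {2,3}, the coefficient of δ_{cat₁(w)} in K_{0,1}(w) is a strictly positive integer (the identity partition is always a good-shuffle realizing cat₁(w) from its own blocks). Hence the matrix of these coefficients, over all words with fixed numbers of 2's and 3's, is triangular with nonzero diagonal. -/

import Mathlib

/-- Words over the alphabet `{0,1}`, encoded with `false` = `0` and `true` = `1`. -/
abbrev Word : Type := List Bool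

/-- The ℚ-vector space `A` of finitely supported functions on words over `{0,1}`. -/
abbrev A01 : Type := Word →₀ ℚ

/-- The basis element `δ_x` of `A` attached to a word `x`. -/
noncomputable def δ (x : Word) : A01 := Finsupp.single x 1

/-- Prepend the letter `a` to every word of a formal sum. -/
noncomputable def prependLetter (a : Bool) (f : A01) : A01 :=
  Finsupp.mapDomain (List.cons a) f

/-- The shuffle product of two words, as an element of `A`. -/
noncomputable def shuffle : Word → Word → A01
  | [], y => δ y
  | a :: x, [] => δ (a :: x)
  | a :: x, b :: y =>
      prependLetter a (shuffle x (b :: y)) + prependLetter b (shuffle (a :: x) y)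
  termination_by x y => x.length + y.length

/-- The half-shuffle product on basis words: `δ_{a::x} ≺ δ_y = a·(x ш y)`, `δ_[] ≺ δ_y = 0`. -/
noncomputable def halfWord : Word → Word → A01
  | [], _ => 0
  | a :: x, y => prependLetter a (shuffle x y)

/-- The half-shuffle (zinbiel) product `≺` on `A`, extended bilinearly from basis words. -/
noncomputable def half (f g : A01) : A01 :=
  f.sum fun x c => g.sum fun y d => (c * d) • halfWord x y

/-- The right-parenthesized product `K(a_1, …, a_n) = a_1 ≺ (a_2 ≺ (⋯ ≺ a_n))`,
with `K(a_n) = a_n`, and `δ_[]` (the shuffle unit) for the empty list. -/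
noncomputable def Klist : List A01 → A01
  | [] => δ []
  | [a] => a
  | a :: b :: l => half a (Klist (b :: l))

/-- The generators `z_2 = δ_{(1,0)}` and `z_3 = u·δ_{(1,0,0)} + v·δ_{(1,1,0)}`;
letters of the alphabet `{2,3}` are encoded with `false` = `2` and `true` = `3`. -/
noncomputable def zgen (u v : ℚ) : Bool → A01
  | false => δ [true, false]
  | true => u • δ [true, false, false] + v • δ [true, true, false]

/-- `K_{u,v}(w)` for a word `w` over `{2,3}` (encoded with `false` = `2`, `true` = `3`). -/
noncomputable def Kuv (u v : ℚ) (w : List Bool) : A01 :=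
  Klist (w.map (zgen u v))

/-- The block substitution `2 ↦ (1,0)`, `3 ↦ (1,0,0)`. -/
def blocks0 (c : Bool) : Word := if c then [true, false, false] else [true, false]

/-- The block substitution `2 ↦ (1,0)`, `3 ↦ (1,1,0)`. -/
def blocks1 (c : Bool) : Word := if c then [true, true, false] else [true, false]

/-- `cat₀(w)`: substitute `2 ↦ (1,0)`, `3 ↦ (1,0,0)` and concatenate. -/
def cat0 (w : List Bool) : Word := (w.map blocks0).flatten

/-- `cat₁(w)`: substitute `2 ↦ (1,0)`, `3 ↦ (1,1,0)` and concatenate. -/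
def cat1 (w : List Bool) : Word := (w.map blocks1).flatten

/-- A good-shuffle realizing the word `x` from the words `ws = (w^1, …, w^n)`:
a partition `S` of the positions of `x`, reading `x` along `S j` gives `w^j`,
and the minima of the parts are in increasing order. -/
def GoodShuffle (ws : List Word) (x : Word)
    (S : Fin ws.length → Finset (Fin x.length)) : Prop :=
  (∀ p : Fin x.length, ∃! j, p ∈ S j) ∧
  (∀ j, ((S j).sort (· ≤ ·)).map x.get = ws.get j) ∧
  (∀ j k, j < k → (S j).min < (S k).min)

/-- The weight of a word over `{2,3}`: the sum of its letters. -/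
def wt (w : List Bool) : ℕ := (w.map fun c => if c then 3 else 2).sum

/-!
Since `z₂ = δ_{10}` and `z₃ = δ_{110}`, `K_{0,1}(c w) = 1·(t_c ш K_{0,1}(w))` with block tails
`t₂ = 0`, `t₃ = 10`. By induction on `w`, every word in the support of `K_{0,1}(w)` is
lexicographically at least `cat₁(w)`: shuffling `0` or `10` into a word `y ≥ cat₁(w)` of the same
length never goes below `t_c ++ cat₁(w)`, because `0` is the smallest letter and the blocks `10`,
`110` of `cat₁(w)` start with `1`. As `cat₁` is strictly monotone, the coefficients below the
diagonal vanish. All coefficients are natural numbers, and the identity shuffle contributes `1`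
to the diagonal one.
-/

open Finsupp

lemma strictMono_cons (a : Bool) : StrictMono (List.cons a : Word → Word) :=
  fun _ _ => List.cons_lt_cons_self.2

lemma false_cons_lt_true_cons (x y : Word) : false :: x < true :: y :=
  List.Lex.rel rfl

lemma true_cons_le_cons_iff {c : Bool} {x y : Word} :
    true :: x ≤ c :: y ↔ c = true ∧ x ≤ y := by
  cases c
  · simpa using false_cons_lt_true_cons y x
  · simpa using (strictMono_cons true).le_iff_le

lemma prependLetter_apply_cons (a : Bool) (f : A01) (x : Word) :
    prependLetter a f (a :: x) = f x :=
  mapDomain_apply List.cons_injective f x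

lemma exists_cons_of_mem_support_prependLetter {a : Bool} {f : A01} {z : Word}
    (hz : z ∈ (prependLetter a f).support) : ∃ x ∈ f.support, z = a :: x := by
  obtain ⟨x, hx, rfl⟩ := Finset.mem_image.1 (mapDomain_support hz)
  exact ⟨x, hx, rfl⟩

lemma prependLetter_δ (a : Bool) (x : Word) : prependLetter a (δ x) = δ (a :: x) :=
  mapDomain_single

lemma mem_support_δ {x z : Word} : z ∈ (δ x).support ↔ z = x := by
  simp [δ]

lemma shuffle_nil_right (x : Word) : shuffle x [] = δ x := by
  cases x <;> rw [shuffle]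

lemma mem_support_shuffle_cons_cons {a b : Bool} {x y z : Word}
    (hz : z ∈ (shuffle (a :: x) (b :: y)).support) :
    (∃ t ∈ (shuffle x (b :: y)).support, z = a :: t) ∨
      ∃ t ∈ (shuffle (a :: x) y).support, z = b :: t := by
  rw [shuffle] at hz
  exact (Finset.mem_union.1 (support_add hz)).imp exists_cons_of_mem_support_prependLetter
    exists_cons_of_mem_support_prependLetter

lemma length_of_mem_support_shuffle (x y : Word) :
    ∀ z ∈ (shuffle x y).support, z.length = x.length + y.length := by
  induction x, y using shuffle.induct with
  | case1 y => rw [shuffle]; rintro z hz; simp [mem_support_δ.1 hz]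
  | case2 a x => rw [shuffle]; rintro z hz; simp [mem_support_δ.1 hz]
  | case3 a x b y ih₁ ih₂ =>
    intro z hz
    rcases mem_support_shuffle_cons_cons hz with ⟨t, ht, rfl⟩ | ⟨t, ht, rfl⟩
    · simp [ih₁ t ht]; omega
    · simp [ih₂ t ht]; omega

lemma false_cons_le_of_mem_support_shuffle (y : Word) :
    ∀ z ∈ (shuffle [false] y).support, false :: y ≤ z := by
  induction y with
  | nil => rw [shuffle_nil_right]; rintro z hz; rw [mem_support_δ.1 hz]
  | cons b y ih =>
    intro z hz
    rcases mem_support_shuffle_cons_cons hz with ⟨t, ht, rfl⟩ | ⟨t, ht, rfl⟩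
    · rw [shuffle, mem_support_δ] at ht
      rw [ht]
    · cases b
      · exact (strictMono_cons false).monotone (ih t ht)
      · exact (false_cons_lt_true_cons _ _).le

def blockTail (c : Bool) : Word := if c then [true, false] else [false]

lemma blocks1_eq_cons_blockTail (c : Bool) : blocks1 c = true :: blockTail c := by
  cases c <;> rfl

lemma cat1_cons (c : Bool) (w : List Bool) :
    cat1 (c :: w) = true :: (blockTail c ++ cat1 w) := by
  simp [cat1, blocks1_eq_cons_blockTail]

lemma true_false_cat1_le_of_mem_support_shuffle (v : List Bool) :
    ∀ y, cat1 v ≤ y → y.length = (cat1 v).length →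
      ∀ z ∈ (shuffle [true, false] y).support, true :: false :: cat1 v ≤ z := by
  induction v with
  | nil =>
    intro y _ hlen z hz
    rw [List.length_eq_zero_iff.1 hlen, shuffle_nil_right, mem_support_δ] at hz
    exact hz ▸ le_rfl
  | cons a v ih =>
    intro y hle hlen z hz
    rw [cat1_cons] at hle hlen ⊢
    obtain ⟨c, y, rfl⟩ := List.exists_cons_of_length_eq_add_one hlen
    obtain ⟨rfl, hy⟩ := true_cons_le_cons_iff.1 hle
    rcases mem_support_shuffle_cons_cons hz with ⟨t, ht, rfl⟩ | ⟨t, ht, rfl⟩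
    · refine (strictMono_cons true).monotone
        (le_trans ?_ (false_cons_le_of_mem_support_shuffle _ t ht))
      exact (strictMono_cons false).monotone ((strictMono_cons true).monotone hy)
    refine (strictMono_cons true).monotone ?_
    rcases y with _ | ⟨e, y⟩
    · rw [shuffle_nil_right, mem_support_δ] at ht
      exact ht ▸ (false_cons_lt_true_cons _ _).le
    rcases mem_support_shuffle_cons_cons ht with ⟨s, -, rfl⟩ | ⟨s, hs, rfl⟩
    · exact (false_cons_lt_true_cons _ _).le
    cases e
    · -- `t` starts with the `0` heading `y`, which forces the block `cat₁(a)` to be `10`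
      cases a
      · have hy' : cat1 v ≤ y := by simpa [blockTail, (strictMono_cons _).le_iff_le] using hy
        have hs' := ih y hy' (by simpa [blockTail] using hlen) s hs
        simpa [blockTail, (strictMono_cons _).le_iff_le] using hs'
      · simp [blockTail, true_cons_le_cons_iff] at hy
    · exact (false_cons_lt_true_cons _ _).le

lemma blockTail_append_le_of_mem_support_shuffle (c : Bool) {v : List Bool} {y : Word}
    (hle : cat1 v ≤ y) (hlen : y.length = (cat1 v).length) :
    ∀ z ∈ (shuffle (blockTail c) y).support, blockTail c ++ cat1 v ≤ z := by
  cases c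
  · exact fun z hz =>
      ((strictMono_cons false).monotone hle).trans (false_cons_le_of_mem_support_shuffle y z hz)
  · exact true_false_cat1_le_of_mem_support_shuffle v y hle hlen

lemma zgen_zero_one (c : Bool) : zgen 0 1 c = δ (blocks1 c) := by
  cases c <;> simp [zgen, blocks1]

lemma half_δ (x : Word) (g : A01) : half (δ x) g = g.sum fun y d => d • halfWord x y := by
  simp [half, δ, sum_single_index]

lemma Kuv_zero_one_cons (c : Bool) (w : List Bool) :
    Kuv 0 1 (c :: w) =
      (Kuv 0 1 w).sum fun y d => d • prependLetter true (shuffle (blockTail c) y) := by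
  have hhalf : ∀ g, half (zgen 0 1 c) g =
      g.sum fun y d => d • prependLetter true (shuffle (blockTail c) y) := by
    intro g
    rw [zgen_zero_one, half_δ, blocks1_eq_cons_blockTail]
    rfl
  cases w with
  | nil =>
    show zgen 0 1 c = (δ []).sum _
    rw [δ, sum_single_index (by simp), one_smul, shuffle_nil_right, prependLetter_δ,
      zgen_zero_one, blocks1_eq_cons_blockTail]
  | cons d w => exact hhalf _

lemma length_eq_and_cat1_le_of_mem_support_Kuv_zero_one (w : List Bool) :
    ∀ y ∈ (Kuv 0 1 w).support, y.length = (cat1 w).length ∧ cat1 w ≤ y := by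
  induction w with
  | nil =>
    intro y hy
    rw [mem_support_δ.1 hy]
    exact ⟨rfl, le_rfl⟩
  | cons c w ih =>
    intro y hy
    rw [Kuv_zero_one_cons] at hy
    obtain ⟨y₀, hy₀, hy⟩ := Finset.mem_biUnion.1 (support_sum hy)
    obtain ⟨z, hz, rfl⟩ := exists_cons_of_mem_support_prependLetter (support_smul hy)
    obtain ⟨hlen, hle⟩ := ih y₀ hy₀
    rw [cat1_cons]
    refine ⟨?_, (strictMono_cons true).monotone
      (blockTail_append_le_of_mem_support_shuffle c hle hlen z hz)⟩
    simp [length_of_mem_support_shuffle _ _ z hz, hlen]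

lemma cat1_strictMono : StrictMono cat1 := by
  intro w' w h
  induction h with
  | nil => rw [cat1_cons]; exact List.nil_lt_cons _ _
  | cons _ ih => exact List.append_left_lt ih
  | rel h =>
    obtain ⟨rfl, rfl⟩ := Bool.lt_iff.1 h
    rw [cat1_cons, cat1_cons]
    exact List.cons_lt_cons_self.2 (false_cons_lt_true_cons _ _)

noncomputable def natCoeffs : AddSubmonoid A01 :=
  AddMonoidHom.mrange (mapRange.addMonoidHom (Nat.castAddMonoidHom ℚ))

lemma exists_nat_eq_apply_of_mem_natCoeffs {f : A01} (hf : f ∈ natCoeffs) (x : Word) :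
    ∃ k : ℕ, f x = k := by
  obtain ⟨g, rfl⟩ := hf
  exact ⟨g x, rfl⟩

lemma apply_nonneg_of_mem_natCoeffs {f : A01} (hf : f ∈ natCoeffs) (x : Word) : 0 ≤ f x := by
  obtain ⟨k, hk⟩ := exists_nat_eq_apply_of_mem_natCoeffs hf x
  exact hk ▸ k.cast_nonneg

lemma δ_mem_natCoeffs (x : Word) : δ x ∈ natCoeffs :=
  ⟨single x 1, by simp [δ]⟩

lemma prependLetter_mem_natCoeffs (a : Bool) {f : A01} (hf : f ∈ natCoeffs) :
    prependLetter a f ∈ natCoeffs := by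
  obtain ⟨g, rfl⟩ := hf
  exact ⟨mapDomain (List.cons a) g, (mapDomain_mapRange _ g _ (map_zero _) (map_add _)).symm⟩

lemma shuffle_mem_natCoeffs (x y : Word) : shuffle x y ∈ natCoeffs := by
  induction x, y using shuffle.induct with
  | case1 y => rw [shuffle]; exact δ_mem_natCoeffs y
  | case2 a x => rw [shuffle]; exact δ_mem_natCoeffs _
  | case3 a x b y ih₁ ih₂ =>
    rw [shuffle]
    exact add_mem (prependLetter_mem_natCoeffs a ih₁) (prependLetter_mem_natCoeffs b ih₂)

lemma Kuv_zero_one_mem_natCoeffs (w : List Bool) : Kuv 0 1 w ∈ natCoeffs := by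
  induction w with
  | nil => exact δ_mem_natCoeffs []
  | cons c w ih =>
    rw [Kuv_zero_one_cons]
    refine sum_mem fun y _ => ?_
    obtain ⟨k, hk⟩ := exists_nat_eq_apply_of_mem_natCoeffs ih y
    dsimp only
    rw [hk, Nat.cast_smul_eq_nsmul]
    exact nsmul_mem (prependLetter_mem_natCoeffs true (shuffle_mem_natCoeffs _ _)) k

lemma one_le_shuffle_apply_append (x y : Word) : 1 ≤ shuffle x y (x ++ y) := by
  induction x, y using shuffle.induct with
  | case1 y => simp [shuffle, δ]
  | case2 a x => simp [shuffle, δ]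
  | case3 a x b y ih₁ _ =>
    rw [shuffle, Finsupp.add_apply, List.cons_append, prependLetter_apply_cons]
    have := apply_nonneg_of_mem_natCoeffs
      (prependLetter_mem_natCoeffs b (shuffle_mem_natCoeffs (a :: x) y)) (a :: (x ++ b :: y))
    linarith

lemma one_le_Kuv_zero_one_apply_cat1 (w : List Bool) : 1 ≤ Kuv 0 1 w (cat1 w) := by
  induction w with
  | nil => simp [Kuv, Klist, δ, cat1]
  | cons c w ih =>
    set g := Kuv 0 1 w
    rw [Kuv_zero_one_cons, Finsupp.sum_apply, cat1_cons]
    simp only [Finsupp.smul_apply, smul_eq_mul, prependLetter_apply_cons]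
    calc (1 : ℚ) ≤ g (cat1 w) * shuffle (blockTail c) (cat1 w) (blockTail c ++ cat1 w) :=
          one_le_mul_of_one_le_of_one_le ih (one_le_shuffle_apply_append _ _)
      _ ≤ g.sum fun y d => d * shuffle (blockTail c) y (blockTail c ++ cat1 w) :=
          Finset.single_le_sum (fun y _ => mul_nonneg
            (apply_nonneg_of_mem_natCoeffs (Kuv_zero_one_mem_natCoeffs w) y)
            (apply_nonneg_of_mem_natCoeffs (shuffle_mem_natCoeffs _ _) _))
            (mem_support_iff.2 (by linarith))

/-- Triangularity for `(u,v) = (0,1)`: for words over `{2,3}` (encoded `false` = `2` <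
`true` = `3`) with the same length and the same numbers of `2`'s and `3`'s, if `w'` is
lexicographically smaller than `w` then the coefficient of `δ_{cat₁(w')}` in `K_{0,1}(w)`
vanishes, while the diagonal coefficient of `δ_{cat₁(w)}` in `K_{0,1}(w)` is a strictly
positive integer. -/
theorem K01_matrix_triangular :
    (∀ w w' : List Bool, w.length = w'.length → w.count false = w'.count false →
      w.count true = w'.count true → List.Lex (· < ·) w' w →
      (Kuv 0 1 w) (cat1 w') = 0) ∧
    (∀ w : List Bool, ∃ m : ℕ, 0 < m ∧ (Kuv 0 1 w) (cat1 w) = (m : ℚ)) := by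
  refine ⟨fun w w' _ _ _ hlt => ?_, fun w => ?_⟩
  · by_contra hne
    have hle := (length_eq_and_cat1_le_of_mem_support_Kuv_zero_one w _ (mem_support_iff.2 hne)).2
    exact (cat1_strictMono hlt).not_ge hle
  · obtain ⟨m, hm⟩ :=
      exists_nat_eq_apply_of_mem_natCoeffs (Kuv_zero_one_mem_natCoeffs w) (cat1 w)
    have hdiag := one_le_Kuv_zero_one_apply_cat1 w
    rw [hm] at hdiag
    exact ⟨m, by exact_mod_cast hdiag, hm⟩
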